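/- arXiv:1707.02610 — 2 statements merged into one kernel-verified Lean document; each statement's English description precedes it below -/
import Mathlib

section
/- AP = 1 if and only if all relevant items occupy the top |Rel| positions of the ranking, i.e., O[j] ∈ Rel for all j ≤ |Rel|. -/
/-- Number of relevant items among the top `j` positions of the ranking `O`
(positions are 1-based; index `k : Fin n` corresponds to position `k+1`). -/
def relCount {α : Type} [DecidableEq α] {n : ℕ} (O : Fin n → α) (Rel : Finset α)
    (j : ℕ) : ℕ :=
  (Finset.univ.filter (fun k : Fin n => (k : ℕ) < j ∧ O k ∈ Rel)).card

/-- Precision at position `j`: fraction of relevant items among the top `j`. -/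
noncomputable def prec {α : Type} [DecidableEq α] {n : ℕ} (O : Fin n → α)
    (Rel : Finset α) (j : ℕ) : ℝ :=
  (relCount O Rel j : ℝ) / (j : ℝ)

/-- Average precision of the ranking `O` with relevant set `Rel`. -/
noncomputable def AP {α : Type} [DecidableEq α] {n : ℕ} (O : Fin n → α)
    (Rel : Finset α) : ℝ :=
  (Rel.card : ℝ)⁻¹ *
    ∑ j ∈ Finset.univ.filter (fun j : Fin n => O j ∈ Rel), prec O Rel ((j : ℕ) + 1)

/-
A relevant item at position `j` contributes `Prec@j ≤ 1`, and there are exactly `|Rel|` such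
items, so `AP = 1` exactly when every relevant position has precision one, i.e. when the set of
relevant positions is closed downwards. A downward-closed set of positions of size `|Rel|` is the
initial segment of length `|Rel|`.
-/

open Finset

namespace Fin

theorem forall_le_imp_iff_forall_lt_card {n : ℕ} (p : Fin n → Prop) [DecidablePred p] :
    (∀ i j : Fin n, j ≤ i → p i → p j) ↔ ∀ j : Fin n, (j : ℕ) < #{i | p i} → p j := by
  refine ⟨fun hp j => (lt_card_filter_univ_iff_apply_of_imp p hp).1, fun h i j hji hi => ?_⟩
  have hcard : #{i | p i} ≤ n := (card_le_univ _).trans_eq (Fintype.card_fin n)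
  have hinit : univ.filter (fun i : Fin n => (i : ℕ) < #{i | p i}) = univ.filter p :=
    eq_of_subset_of_card_le (fun k hk => (mem_filter_univ k).2 (h k ((mem_filter_univ k).1 hk)))
      (by rw [card_filter_val_lt, min_eq_right hcard])
  have hi' : (i : ℕ) < #{i | p i} := (mem_filter_univ i).1 (hinit ▸ (mem_filter_univ i).2 hi)
  exact h j (lt_of_le_of_lt hji hi')

end Fin

theorem card_filter_mem_of_bijective {β γ : Type*} [Fintype β] {f : β → γ}
    (hf : Function.Bijective f) (s : Finset γ) [DecidablePred (f · ∈ s)] :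
    #{b | f b ∈ s} = #s :=
  card_nbij f (fun b hb => ((mem_filter_univ b).1 hb)) hf.injective.injOn
    (fun c hc => let ⟨b, hb⟩ := hf.surjective c; ⟨b, (mem_filter_univ b).2 (hb ▸ hc), hb⟩)

section Ranking

variable {α : Type} [DecidableEq α] {n : ℕ} (O : Fin n → α) (Rel : Finset α)

theorem relCount_eq_card_filter (m : ℕ) :
    relCount O Rel m = #((univ.filter fun k : Fin n => (k : ℕ) < m).filter (O · ∈ Rel)) := by
  rw [relCount, filter_filter]

theorem relCount_le_self (m : ℕ) : relCount O Rel m ≤ m := by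
  rw [relCount_eq_card_filter]
  exact (card_filter_le _ _).trans (Fin.card_filter_val_lt.trans_le (min_le_right n m))

theorem relCount_eq_self_iff {m : ℕ} (hm : m ≤ n) :
    relCount O Rel m = m ↔ ∀ k : Fin n, (k : ℕ) < m → O k ∈ Rel := by
  have hinit : #(univ.filter fun k : Fin n => (k : ℕ) < m) = m := by
    rw [Fin.card_filter_val_lt, min_eq_right hm]
  have hfull := card_filter_eq_iff (s := univ.filter fun k : Fin n => (k : ℕ) < m) (p := (O · ∈ Rel))
  rw [hinit] at hfull
  rw [relCount_eq_card_filter, hfull]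
  simp only [mem_filter_univ]

theorem prec_le_one (m : ℕ) : prec O Rel m ≤ 1 :=
  div_le_one_of_le₀ (by exact_mod_cast relCount_le_self O Rel m) m.cast_nonneg

theorem prec_succ_eq_one_iff (j : Fin n) :
    prec O Rel (j + 1) = 1 ↔ ∀ k : Fin n, k ≤ j → O k ∈ Rel := by
  rw [prec, div_eq_one_iff_eq (by positivity), Nat.cast_inj,
    relCount_eq_self_iff O Rel j.isLt]
  simp only [Nat.lt_succ_iff, Fin.val_fin_le]

theorem AP_eq_one_iff_forall_prec (hcard : #{j | O j ∈ Rel} = #Rel) (hRel : Rel.Nonempty) :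
    AP O Rel = 1 ↔ ∀ j : Fin n, O j ∈ Rel → prec O Rel (j + 1) = 1 := by
  have hsum : ∑ _j ∈ ({j | O j ∈ Rel} : Finset (Fin n)), (1 : ℝ) = #Rel := by
    rw [sum_const, hcard, nsmul_one]
  rw [AP, inv_mul_eq_one₀ (by exact_mod_cast hRel.card_pos.ne'), ← hsum, eq_comm,
    sum_eq_sum_iff_of_le (fun j _ => prec_le_one O Rel _)]
  simp only [mem_filter_univ]

end Ranking

theorem AP_eq_one_iff_general {α : Type} [DecidableEq α] {n : ℕ}
    (O : Fin n → α) (hO : Function.Bijective O)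
    (Rel : Finset α) (hRel : Rel.Nonempty) :
    AP O Rel = 1 ↔ ∀ j : Fin n, (j : ℕ) < Rel.card → O j ∈ Rel := by
  have hcard := card_filter_mem_of_bijective hO Rel
  rw [AP_eq_one_iff_forall_prec O Rel hcard hRel, ← hcard,
    ← Fin.forall_le_imp_iff_forall_lt_card (O · ∈ Rel)]
  simp only [prec_succ_eq_one_iff]
  exact ⟨fun h i j hji hi => h i hi j hji, fun h i hi j hji => h i j hji hi⟩

/-- AP = 1 iff all relevant items occupy the top |Rel| positions. -/
theorem AP_eq_one_iff {α : Type} [Fintype α] [DecidableEq α] {n : ℕ}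
    (O : Fin n → α) (hO : Function.Bijective O)
    (Rel : Finset α) (hRel : Rel.Nonempty) :
    AP O Rel = 1 ↔ ∀ j : Fin n, (j : ℕ) < Rel.card → O j ∈ Rel :=
  AP_eq_one_iff_general O hO Rel hRel
end

section
/- Swapping a relevant item at position j with an irrelevant item at position j+1 (relevant item moved up) does not decrease AP; in fact it strictly increases AP. -/
/-! Reindex the sum defining `AP (O ∘ swap j j')` along the swap, so that each relevant
position `k` of `O` is paired with position `swap j j' k` of the new ranking. The counts of
relevant items in the top `t` positions agree for both rankings at every cutoff `t ≠ j + 1`,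
so all paired terms agree except the one of the moved item, whose precision rises from
`(c + 1) / (j + 2)` to `(c + 1) / (j + 1)`, where `c` counts the relevant items above `j`. -/

section

variable {α : Type} [DecidableEq α] {n : ℕ} (O : Fin n → α) (Rel : Finset α)

lemma relCount_comp_perm (σ : Equiv.Perm (Fin n)) {t : ℕ}
    (hσ : ∀ k, (σ k : ℕ) < t ↔ (k : ℕ) < t) :
    relCount (O ∘ σ) Rel t = relCount O Rel t :=
  Finset.card_equiv σ fun k => by simp [hσ]

lemma relCount_succ (k : Fin n) :
    relCount O Rel (k + 1) = relCount O Rel k + if O k ∈ Rel then 1 else 0 := by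
  have hlt : ∀ m : Fin n, (m : ℕ) < k + 1 ↔ m < k ∨ m = k := fun m => by
    rw [Nat.lt_succ_iff_lt_or_eq, Fin.lt_def, Fin.ext_iff]
  unfold relCount
  split_ifs with hk
  · rw [← Finset.card_insert_of_notMem (s := Finset.univ.filter _) (a := k) (by simp)]
    congr 1; ext m
    simp only [Finset.mem_filter, Finset.mem_univ, true_and, Finset.mem_insert, hlt]
    grind
  · rw [add_zero]; congr 1; ext m
    simp only [Finset.mem_filter, Finset.mem_univ, true_and, hlt]
    grind

lemma AP_comp_perm (σ : Equiv.Perm (Fin n)) :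
    AP (O ∘ σ) Rel = (Rel.card : ℝ)⁻¹ *
      ∑ k ∈ Finset.univ.filter (fun k : Fin n => O k ∈ Rel), prec (O ∘ σ) Rel (σ.symm k + 1) := by
  unfold AP
  congr 1
  exact Finset.sum_equiv σ (by simp) (by simp)

end

lemma Fin.val_swap_lt_iff {n : ℕ} {j j' : Fin n} (hjj' : (j' : ℕ) = j + 1) {t : ℕ}
    (ht : t ≠ j + 1) (k : Fin n) : (Equiv.swap j j' k : ℕ) < t ↔ (k : ℕ) < t := by
  rcases eq_or_ne k j with rfl | h1
  · rw [Equiv.swap_apply_left]; omega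
  rcases eq_or_ne k j' with rfl | h2
  · rw [Equiv.swap_apply_right]; omega
  · rw [Equiv.swap_apply_of_ne_of_ne h1 h2]

section

variable {α : Type} [DecidableEq α] {n : ℕ} {O : Fin n → α} {Rel : Finset α} {j j' : Fin n}

lemma prec_comp_swap_of_ne (hjj' : (j' : ℕ) = j + 1) {t : ℕ} (ht : t ≠ j + 1) :
    prec (O ∘ Equiv.swap j j') Rel t = prec O Rel t := by
  rw [prec, prec, relCount_comp_perm O Rel _ (Fin.val_swap_lt_iff hjj' ht)]

lemma prec_lt_prec_comp_swap (hjj' : (j' : ℕ) = j + 1) (hj' : O j' ∈ Rel) (hj : O j ∉ Rel) :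
    prec O Rel (j' + 1) < prec (O ∘ Equiv.swap j j') Rel (j + 1) := by
  have hswapped : relCount (O ∘ Equiv.swap j j') Rel (j + 1) = relCount O Rel j + 1 := by
    rw [relCount_succ, relCount_comp_perm O Rel _ (Fin.val_swap_lt_iff hjj' (by omega))]
    simp [hj']
  have horiginal : relCount O Rel (j' + 1) = relCount O Rel j + 1 := by
    rw [relCount_succ, hjj', relCount_succ]
    simp [hj, hj']
  rw [prec, prec, hswapped, horiginal, hjj']
  push_cast
  exact div_lt_div_of_pos_left (by positivity) (by positivity) (by linarith)

end

theorem AP_swap_up_general {α : Type} [DecidableEq α] {n : ℕ}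
    (O : Fin n → α)
    (Rel : Finset α) (hRel : Rel.Nonempty)
    (j j' : Fin n) (hjj' : (j' : ℕ) = (j : ℕ) + 1)
    (hj' : O j' ∈ Rel) (hj : O j ∉ Rel) :
    AP (O ∘ Equiv.swap j j') Rel > AP O Rel := by
  rw [gt_iff_lt, AP_comp_perm, AP, Equiv.symm_swap]
  refine mul_lt_mul_of_pos_left (Finset.sum_lt_sum (fun k hk => ?_) ?_) (by simpa using hRel)
  · have hkj : k ≠ j := by rintro rfl; exact hj (Finset.mem_filter.1 hk).2
    rcases eq_or_ne k j' with rfl | hkj'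
    · rw [Equiv.swap_apply_right]; exact (prec_lt_prec_comp_swap hjj' hj' hj).le
    · rw [Equiv.swap_apply_of_ne_of_ne hkj hkj', prec_comp_swap_of_ne hjj' (by omega)]
  · exact ⟨j', by simpa using hj', by simpa using prec_lt_prec_comp_swap hjj' hj' hj⟩

/-- Swapping a relevant item at position j+1 up to position j (where an
irrelevant item sits) strictly increases AP. -/
theorem AP_swap_up {α : Type} [Fintype α] [DecidableEq α] {n : ℕ}
    (O : Fin n → α) (hO : Function.Bijective O)
    (Rel : Finset α) (hRel : Rel.Nonempty)
    (j j' : Fin n) (hjj' : (j' : ℕ) = (j : ℕ) + 1)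
    (hj' : O j' ∈ Rel) (hj : O j ∉ Rel) :
    AP (O ∘ Equiv.swap j j') Rel > AP O Rel :=
  AP_swap_up_general O Rel hRel j j' hjj' hj' hj
end
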